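/- Let C₁, C₂ ⊆ 𝔽₂ⁿ be binary codes containing the zero vector, with kernels Ker(C₁), Ker(C₂), and let C be their Plotkin construction. Then the map (x, y) ↦ (x | x+y) is a bijection from Ker(C₁) × Ker(C₂) onto Ker(C); in particular |Ker(C)| = |Ker(C₁)| · |Ker(C₂)|. -/

import Mathlib

def plotkin {n : ℕ} (C₁ C₂ : Set (Fin n → ZMod 2)) : Set (Fin (n + n) → ZMod 2) :=
  {w | ∃ u ∈ C₁, ∃ v ∈ C₂, w = Fin.append u (u + v)}

def ker {m : ℕ} (C : Set (Fin m → ZMod 2)) : Set (Fin m → ZMod 2) :=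
  {x | (x + ·) '' C = C}

/-!
The kernel of a code is its stabilizer under translation. The Plotkin code is the image of
`C₁ × C₂` under the additive automorphism `(u, v) ↦ (u | u + v)`, automorphisms transport
stabilizers, and the stabilizer of a product of nonempty sets is the product of the stabilizers.
-/

open Set
open scoped Pointwise

theorem Fin.append_add {α : Type*} [Add α] {m n : ℕ} (u u' : Fin m → α) (v v' : Fin n → α) :
    Fin.append (u + u') (v + v') = Fin.append u v + Fin.append u' v' := by
  ext i
  refine Fin.addCases (fun j => ?_) (fun j => ?_) i <;> simp

namespace AddAction

variable {G H : Type*} [AddGroup G] [AddGroup H]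

theorem stabilizer_image_addEquiv (e : G ≃+ H) (s : Set G) :
    (stabilizer H (e '' s) : Set H) = e '' stabilizer G s := by
  ext a
  rw [← e.apply_symm_apply a, e.injective.mem_set_image]
  simp only [SetLike.mem_coe, mem_stabilizer_iff, ← image_vadd_distrib]
  exact e.injective.image_injective.eq_iff

theorem stabilizer_prod {s : Set G} {t : Set H} (hs : s.Nonempty) (ht : t.Nonempty) :
    (stabilizer (G × H) (s ×ˢ t) : Set (G × H)) =
      (stabilizer G s : Set G) ×ˢ (stabilizer H t : Set H) := by
  ext ⟨a, b⟩
  have hvadd : (a, b) +ᵥ s ×ˢ t = (a +ᵥ s) ×ˢ (b +ᵥ t) := prodMap_image_prod _ _ s t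
  simp only [SetLike.mem_coe, mem_stabilizer_iff, hvadd]
  exact prod_eq_prod_iff_of_nonempty (hs.vadd_set.prod ht.vadd_set)

end AddAction

def plotkinAddEquiv (α : Type*) [AddCommGroup α] (n : ℕ) :
    (Fin n → α) × (Fin n → α) ≃+ (Fin (n + n) → α) where
  toFun p := Fin.append p.1 (p.1 + p.2)
  invFun z := (fun i => z (Fin.castAdd n i), fun i => -z (Fin.castAdd n i) + z (Fin.natAdd n i))
  left_inv p := by
    ext i <;> simp only [Fin.append_left, Fin.append_right, Pi.add_apply, neg_add_cancel_left]
  right_inv z := by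
    convert Fin.append_castAdd_natAdd using 2
    ext i
    exact add_neg_cancel_left _ _
  map_add' p q := by
    simp only [Prod.fst_add, Prod.snd_add, ← Fin.append_add]
    congr 1; abel

theorem ker_eq_stabilizer {m : ℕ} (C : Set (Fin m → ZMod 2)) :
    ker C = AddAction.stabilizer (Fin m → ZMod 2) C := rfl

theorem plotkin_eq_image {n : ℕ} (C₁ C₂ : Set (Fin n → ZMod 2)) :
    plotkin C₁ C₂ = plotkinAddEquiv (ZMod 2) n '' (C₁ ×ˢ C₂) := by
  ext w
  simp [plotkin, plotkinAddEquiv, eq_comm, and_assoc]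

theorem plotkin_ker_bij {n : ℕ} (C₁ C₂ : Set (Fin n → ZMod 2))
    (h₁ : (0 : Fin n → ZMod 2) ∈ C₁) (h₂ : (0 : Fin n → ZMod 2) ∈ C₂) :
    Set.BijOn (fun p : (Fin n → ZMod 2) × (Fin n → ZMod 2) => Fin.append p.1 (p.1 + p.2))
      (ker C₁ ×ˢ ker C₂) (ker (plotkin C₁ C₂)) ∧
    Nat.card (ker (plotkin C₁ C₂)) = Nat.card (ker C₁) * Nat.card (ker C₂) := by
  have hker : ker (plotkin C₁ C₂) = plotkinAddEquiv (ZMod 2) n '' (ker C₁ ×ˢ ker C₂) := by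
    rw [plotkin_eq_image, ker_eq_stabilizer, AddAction.stabilizer_image_addEquiv,
      AddAction.stabilizer_prod ⟨0, h₁⟩ ⟨0, h₂⟩]
    rfl
  have hinj := (plotkinAddEquiv (ZMod 2) n).injective
  refine ⟨hker ▸ hinj.injOn.bijOn_image, ?_⟩
  rw [hker, Nat.card_image_of_injective hinj, Nat.card_congr (Equiv.Set.prod _ _), Nat.card_prod]
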